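/- Let n ≥ 1 be an integer, k ≥ 1 an integer, and λ_1, …, λ_{k+1} nonnegative real numbers satisfying n ∑_{i=1}^k (λ_{k+1} − λ_i)² ≤ 2 ∑_{i=1}^k (λ_{k+1} − λ_i) λ_i. Then λ_{k+1} ≤ ((n+2)/(nk)) ∑_{i=1}^k λ_i. -/

import Mathlib

/-! Expanding the squares, the hypothesis reads `n k Λ² - 2(n+1) Λ S + (n+2) Q ≤ 0` with
`S = ∑ λᵢ`, `Q = ∑ λᵢ²`. Cauchy–Schwarz `S² ≤ k Q` turns this into
`(n k Λ - (n+2) S)(k Λ - S) ≤ 0`, so `Λ` lies between the roots `S/k ≤ (n+2) S/(n k)`. -/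

open Finset

theorem le_of_sub_mul_sub_nonpos {α : Type*} [Ring α] [LinearOrder α] [IsStrictOrderedRing α]
    {x a b : α} (h : (x - a) * (x - b) ≤ 0) (hba : b ≤ a) : x ≤ a := by
  by_contra! hax
  have : 0 < (x - a) * (x - b) := mul_pos (sub_pos.2 hax) (sub_pos.2 (hba.trans_lt hax))
  exact this.not_ge h

theorem sum_sub_sq_eq {ι : Type*} (s : Finset ι) (f : ι → ℝ) (c : ℝ) :
    ∑ i ∈ s, (c - f i) ^ 2 = #s * c ^ 2 - 2 * c * ∑ i ∈ s, f i + ∑ i ∈ s, f i ^ 2 := by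
  simp only [sub_sq, sum_add_distrib, sum_sub_distrib, sum_const, nsmul_eq_mul, ← mul_sum]

theorem sum_sub_mul_eq {ι : Type*} (s : Finset ι) (f : ι → ℝ) (c : ℝ) :
    ∑ i ∈ s, (c - f i) * f i = c * ∑ i ∈ s, f i - ∑ i ∈ s, f i ^ 2 := by
  simp only [sub_mul, sum_sub_distrib, ← mul_sum, sq]

theorem yang_quadratic_nonpos {ι : Type*} (s : Finset ι) (f : ι → ℝ) {Λ n : ℝ} (hn : 0 ≤ n)
    (h : n * ∑ i ∈ s, (Λ - f i) ^ 2 ≤ 2 * ∑ i ∈ s, (Λ - f i) * f i) :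
    (n * #s * Λ - (n + 2) * ∑ i ∈ s, f i) * (#s * Λ - ∑ i ∈ s, f i) ≤ 0 := by
  rw [sum_sub_sq_eq, sum_sub_mul_eq] at h
  have hcs : (∑ i ∈ s, f i) ^ 2 ≤ #s * ∑ i ∈ s, f i ^ 2 := sq_sum_le_card_mul_sum_sq
  nlinarith [mul_le_mul_of_nonneg_left h (Nat.cast_nonneg (α := ℝ) #s),
    mul_le_mul_of_nonneg_left hcs (by linarith : (0 : ℝ) ≤ n + 2)]

/-- Algebraic content of Remark 5.1: the Yang-type inequality (I) of Theorem 5.1 for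
nonnegative eigenvalues yields `lam (k+1) ≤ ((n+2)/(nk)) ∑_{i=1}^k lam i`, improving a
result of Niu and Zhang. -/
theorem kohn_upper_bound (n : ℕ) (hn : 1 ≤ n) (k : ℕ) (hk : 1 ≤ k)
    (lam : ℕ → ℝ) (hnonneg : ∀ i : ℕ, 1 ≤ i → i ≤ k + 1 → 0 ≤ lam i)
    (h : (n : ℝ) * ∑ i ∈ Finset.Icc 1 k, (lam (k+1) - lam i)^2
        ≤ 2 * ∑ i ∈ Finset.Icc 1 k, (lam (k+1) - lam i) * lam i) :
    lam (k+1) ≤ ((n : ℝ) + 2)/((n : ℝ) * k) * ∑ i ∈ Finset.Icc 1 k, lam i := by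
  set S := ∑ i ∈ Icc 1 k, lam i
  have hS : 0 ≤ S := sum_nonneg fun i hi ↦
    hnonneg i (mem_Icc.1 hi).1 ((mem_Icc.1 hi).2.trans k.le_succ)
  have hn0 : (0 : ℝ) < n := by exact_mod_cast hn
  have hnk : (0 : ℝ) < n * k := mul_pos hn0 (by exact_mod_cast hk)
  have hquad := yang_quadratic_nonpos (Icc 1 k) lam hn0.le h
  rw [Nat.card_Icc, Nat.add_sub_cancel] at hquad
  have hroot : (n * k * lam (k + 1) - (n + 2) * S) * (n * k * lam (k + 1) - n * S) ≤ 0 :=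
    calc _ = n * ((n * k * lam (k + 1) - (n + 2) * S) * (k * lam (k + 1) - S)) := by ring
      _ ≤ 0 := mul_nonpos_of_nonneg_of_nonpos hn0.le hquad
  have hlarger_root := le_of_sub_mul_sub_nonpos hroot (by linarith)
  rw [div_mul_eq_mul_div, le_div_iff₀ hnk]
  linarith [hlarger_root]
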